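/- Homologous based matrices over an integral domain R are cobordant. -/

import Mathlib

/-!  Based skew-symmetric matrices over an abelian group `H`, after Turaev.
A based matrix is a triple `(G, s, b)` where `G` is a finite set, `s ∈ G`,
and `b : G × G → H` is skew-symmetric.  We realize the finite set `G` as a
finite set of natural numbers; the values of `b` outside `G` are irrelevant
(isomorphism, homology, fillings etc. only refer to values on `G`). -/

/-- The data of a based matrix over `H`: a finite carrier `G ⊆ ℕ`, a base
point `s` and a pairing `b`. -/
structure PreBM (H : Type*) where
  /-- the underlying finite set -/
  G : Finset ℕ
  /-- the base point `s` -/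
  s : ℕ
  /-- the pairing -/
  b : ℕ → ℕ → H

variable {H : Type*} [AddCommGroup H]

/-- `(G, s, b)` is a based matrix: `s ∈ G` and `b` is skew-symmetric on `G`
(with vanishing diagonal). -/
def IsBM (T : PreBM H) : Prop :=
  T.s ∈ T.G ∧ (∀ g ∈ T.G, ∀ h ∈ T.G, T.b g h = -T.b h g) ∧
    ∀ g ∈ T.G, T.b g g = 0

/-- Isomorphism of based matrices: a bijection of the carriers preserving the
base point and the pairing. -/
def BMIso (T T' : PreBM H) : Prop :=
  ∃ f : ℕ → ℕ, Set.BijOn f (T.G : Set ℕ) (T'.G : Set ℕ) ∧ f T.s = T'.s ∧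
    ∀ g ∈ T.G, ∀ h ∈ T.G, T'.b (f g) (f h) = T.b g h

/-- `g` is an annihilating element of `T`. -/
def Annihilating (T : PreBM H) (g : ℕ) : Prop :=
  g ∈ T.G ∧ g ≠ T.s ∧ ∀ h ∈ T.G, T.b g h = 0

/-- `g` is a core element of `T`. -/
def CoreElt (T : PreBM H) (g : ℕ) : Prop :=
  g ∈ T.G ∧ g ≠ T.s ∧ ∀ h ∈ T.G, T.b g h = T.b T.s h

/-- `g₁, g₂` is a complementary pair of elements of `T`. -/
def ComplPair (T : PreBM H) (g₁ g₂ : ℕ) : Prop :=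
  g₁ ∈ T.G ∧ g₂ ∈ T.G ∧ g₁ ≠ T.s ∧ g₂ ≠ T.s ∧ g₁ ≠ g₂ ∧
    ∀ h ∈ T.G, T.b g₁ h + T.b g₂ h = T.b T.s h

/-- A based matrix is primitive if it has no annihilating elements, no core
elements and no complementary pairs. -/
def Primitive (T : PreBM H) : Prop :=
  (∀ g, ¬Annihilating T g) ∧ (∀ g, ¬CoreElt T g) ∧ ∀ g₁ g₂, ¬ComplPair T g₁ g₂

/-- Elementary extension `M₁`: adjoin one annihilating element. -/
def IsExt1 (T T' : PreBM H) : Prop :=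
  T'.s = T.s ∧ ∃ g, g ∉ T.G ∧ T'.G = insert g T.G ∧
    (∀ x ∈ T.G, ∀ y ∈ T.G, T'.b x y = T.b x y) ∧
    ∀ h ∈ T'.G, T'.b g h = 0

/-- Elementary extension `M₂`: adjoin one core element. -/
def IsExt2 (T T' : PreBM H) : Prop :=
  T'.s = T.s ∧ ∃ g, g ∉ T.G ∧ T'.G = insert g T.G ∧
    (∀ x ∈ T.G, ∀ y ∈ T.G, T'.b x y = T.b x y) ∧
    ∀ h ∈ T'.G, T'.b g h = T'.b T'.s h

/-- Elementary extension `M₃`: adjoin a pair of complementary elements. -/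
def IsExt3 (T T' : PreBM H) : Prop :=
  T'.s = T.s ∧ ∃ g₁ g₂, g₁ ∉ T.G ∧ g₂ ∉ T.G ∧ g₁ ≠ g₂ ∧
    T'.G = insert g₁ (insert g₂ T.G) ∧
    (∀ x ∈ T.G, ∀ y ∈ T.G, T'.b x y = T.b x y) ∧
    ∀ h ∈ T'.G, T'.b g₁ h + T'.b g₂ h = T'.b T'.s h

/-- One elementary extension between based matrices. -/
def StepExt (T T' : PreBM H) : Prop :=
  IsBM T ∧ IsBM T' ∧ (IsExt1 T T' ∨ IsExt2 T T' ∨ IsExt3 T T')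

/-- Two based matrices are homologous if they are related by a finite
sequence of elementary extensions, inverse extensions and isomorphisms. -/
def Homologous : PreBM H → PreBM H → Prop :=
  Relation.EqvGen fun T T' => StepExt T T' ∨ (IsBM T ∧ IsBM T' ∧ BMIso T T')
variable {R : Type*} [CommRing R] [IsDomain R]

/-- The union `G = ⋃_t G_t` of the carriers of a tuple of based matrices. -/
def allG (L : List (PreBM R)) : Finset ℕ := L.foldr (fun T s => T.G ∪ s) ∅

/-- The vector `s₁ + s₂ + ⋯ + s_r ∈ Λ = RG`. -/
noncomputable def sVec (L : List (PreBM R)) : ℕ →₀ R :=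
  (L.map fun T => Finsupp.single T.s (1 : R)).sum

/-- The submodule `Λ_s ⊆ Λ` generated by the base points `s₁, …, s_r`. -/
noncomputable def sSpan (L : List (PreBM R)) : Submodule R (ℕ →₀ R) :=
  Submodule.span R {v : ℕ →₀ R | ∃ T ∈ L, v = Finsupp.single T.s (1 : R)}

/-- The skew-symmetric form `b = ⊕_t b_t` on `Λ = RG`, evaluated on a pair of
vectors: `b(g,h) = b_t(g,h)` for `g, h ∈ G_t` and `b(G_t, G_{t'}) = 0` for
`t ≠ t'` (the carriers being disjoint, at most one summand below is
non-zero). -/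
noncomputable def blockB (L : List (PreBM R)) (v w : ℕ →₀ R) : R :=
  ∑ g ∈ v.support, ∑ h ∈ w.support,
    v g * w h * (L.map fun T => if g ∈ T.G ∧ h ∈ T.G then T.b g h else 0).sum

/-- A vector of `Λ` is short if it lies in `Λ_s`, in `g + Λ_s` for some
`g ∈ G − {s₁, …, s_r}`, or in `g + h + Λ_s` for distinct
`g, h ∈ G − {s₁, …, s_r}`. -/
def ShortVec (L : List (PreBM R)) (x : ℕ →₀ R) : Prop :=
  x ∈ sSpan L ∨
  (∃ g ∈ allG L, (∀ T ∈ L, g ≠ T.s) ∧ x - Finsupp.single g 1 ∈ sSpan L) ∨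
  (∃ g ∈ allG L, ∃ h ∈ allG L, g ≠ h ∧ (∀ T ∈ L, g ≠ T.s ∧ h ≠ T.s) ∧
    x - Finsupp.single g 1 - Finsupp.single h 1 ∈ sSpan L)

/-- A filling of the tuple `T₁, …, T_r`: a finite family of short vectors of
`Λ` whose sum is `∑_{g ∈ G} g` modulo `Λ_s`, one of which equals
`s₁ + ⋯ + s_r`. -/
def IsFilling (L : List (PreBM R)) {k : ℕ} (lam : Fin k → (ℕ →₀ R)) : Prop :=
  (∀ i, ShortVec L (lam i)) ∧ (∃ i, lam i = sVec L) ∧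
    (∑ i, lam i) - (∑ g ∈ allG L, Finsupp.single g (1 : R)) ∈ sSpan L

/-- The genus `σ(T₁, …, T_r)` of a tuple of based matrices: the minimum over
all fillings of half the rank of the matrix `(b(λ_i, λ_j))_{i,j}`. -/
noncomputable def tupleGenus (L : List (PreBM R)) : ℕ :=
  sInf {n : ℕ | ∃ (k : ℕ) (lam : Fin k → (ℕ →₀ R)), IsFilling L lam ∧
    n = (Matrix.of fun i j : Fin k => blockB L (lam i) (lam j)).rank / 2}

/-- `-T = (G, s, -b)`. -/
def negBM (T : PreBM R) : PreBM R := ⟨T.G, T.s, fun g h => -T.b g h⟩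

/-- The carriers of the members of the tuple are pairwise disjoint. -/
def DisjointCarriers (L : List (PreBM R)) : Prop :=
  L.Pairwise fun T T' => Disjoint T.G T'.G
/-- Two based matrices `T₁, T₂` over an integral domain are cobordant if
`σ(T₁, −T₂) = 0`.  (As in the paper, `T₁` and `T₂` are first replaced by
isomorphic based matrices with disjoint carriers.) -/
def Cobordant {R : Type*} [CommRing R] [IsDomain R] (T₁ T₂ : PreBM R) : Prop :=
  ∃ T₁' T₂' : PreBM R, IsBM T₁' ∧ IsBM T₂' ∧ BMIso T₁ T₁' ∧ BMIso T₂ T₂' ∧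
    Disjoint T₁'.G T₂'.G ∧ tupleGenus [T₁', negBM T₂'] = 0


/-! Homology is generated by the steps `HomStep`: an elementary extension or an isomorphism.
Two inverse steps out of the same based matrix can always be completed to a common based matrix by
at most one further inverse step on each side, so by the Church–Rosser lemma homologous based
matrices have a common ancestor `V`, from which both are reached by steps. It therefore suffices
that `V` is cobordant to itself and that cobordism survives a step on either side. Both follow
with fillings whose matrix `(b(λ_i, λ_j))` vanishes: the vectors `g + g'` fill `(V, -V')` for a
disjoint copy `V'` of `V`, and if `B₂` is `B` with a set `N` adjoined such that
`∑_{g ∈ N} b(g, ·) = c b(s, ·)`, then `∑ N - c s` is a short vector orthogonal to all of `Λ`, so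
adding it to such a filling of `(A, -B)` gives one of `(A, -B₂)`. -/

set_option linter.unusedSectionVars false

open Finset Relation

theorem Finset.exists_eq_pair_of_card_eq_two {α : Type*} [DecidableEq α] {N : Finset α} {a : α}
    (h : #N = 2) (ha : a ∈ N) : ∃ x, x ≠ a ∧ N = {a, x} := by
  obtain ⟨u, v, huv, rfl⟩ := card_eq_two.1 h
  rcases mem_insert.1 ha with rfl | ha
  · exact ⟨v, huv.symm, rfl⟩
  · rw [mem_singleton.1 ha]
    exact ⟨u, huv, pair_comm _ _⟩

theorem Set.BijOn.sdiff_of_subset {α β : Type*} {f : α → β} {s u : Set α} {t : Set β}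
    (hf : Set.BijOn f s t) (hu : u ⊆ s) : Set.BijOn f (s \ u) (t \ f '' u) := by
  convert (hf.injOn.mono Set.sdiff_subset).bijOn_image using 1
  rw [hf.injOn.image_sdiff, Set.inter_eq_right.2 hu, hf.image_eq]

theorem Equiv.mapsTo_swap_sdiff_pair {G : Finset ℕ} {a x y : ℕ} (hx : x ∈ G) (hxa : x ≠ a)
    (hxy : x ≠ y) : Set.MapsTo (Equiv.swap x y) ↑(G \ {a, x}) ↑(G \ {a, y}) := by
  intro u hu
  simp [Equiv.swap_apply_def] at hu ⊢
  split_ifs <;> grind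

theorem Set.injOn_ite_add {s N : Finset ℕ} {f : ℕ → ℕ} {m : ℕ} (hf : Set.InjOn f ↑(s \ N))
    (hm : ∀ x ∈ s \ N, f x < m) : Set.InjOn (fun x => if x ∈ N then x + m else f x) s := by
  intro x hx y hy hxy
  have hmem : ∀ {z}, z ∈ s → z ∉ N → z ∈ s \ N := fun hz hzN => Finset.mem_sdiff.2 ⟨hz, hzN⟩
  by_cases hxN : x ∈ N <;> by_cases hyN : y ∈ N <;>
    simp only [hxN, hyN, if_true, if_false] at hxy
  · omega
  · exact absurd (hxy ▸ hm y (hmem hy hyN)) (by omega)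
  · exact absurd (hxy ▸ hm x (hmem hx hxN)) (by omega)
  · exact hf (hmem hx hxN) (hmem hy hyN) hxy

namespace PreBM

def restrict (W : PreBM H) (S : Finset ℕ) : PreBM H := ⟨S, W.s, W.b⟩

/-- The copy of `T` carried by `T.G.image f`; meaningful when `f` is injective on `T.G`. -/
noncomputable def map (T : PreBM H) (f : ℕ → ℕ) : PreBM H :=
  ⟨T.G.image f, f T.s, fun x y => T.b (Function.invFunOn f T.G x) (Function.invFunOn f T.G y)⟩

def IsSubmatrix (T W : PreBM H) : Prop :=
  T.G ⊆ W.G ∧ T.s = W.s ∧ ∀ x ∈ T.G, ∀ y ∈ T.G, T.b x y = W.b x y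

theorem isSubmatrix_restrict {W : PreBM H} {S : Finset ℕ} (hS : S ⊆ W.G) :
    (W.restrict S).IsSubmatrix W :=
  ⟨hS, rfl, fun _ _ _ _ => rfl⟩

theorem bijOn_map {T : PreBM H} {f : ℕ → ℕ} (hf : Set.InjOn f T.G) :
    Set.BijOn f T.G (T.map f).G := by
  simpa [PreBM.map] using hf.bijOn_image

theorem map_b {T : PreBM H} {f : ℕ → ℕ} (hf : Set.InjOn f T.G) {x y : ℕ} (hx : x ∈ T.G)
    (hy : y ∈ T.G) : (T.map f).b (f x) (f y) = T.b x y := by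
  simp only [PreBM.map, hf.leftInvOn_invFunOn hx, hf.leftInvOn_invFunOn hy]

end PreBM

open PreBM

theorem IsBM.of_isSubmatrix {T W : PreBM H} (hW : IsBM W) (h : T.IsSubmatrix W)
    (hs : T.s ∈ T.G) : IsBM T := by
  obtain ⟨hG, -, hb⟩ := h
  refine ⟨hs, fun x hx y hy => ?_, fun x hx => ?_⟩
  · rw [hb x hx y hy, hb y hy x hx, hW.2.1 x (hG hx) y (hG hy)]
  · rw [hb x hx x hx, hW.2.2 x (hG hx)]

theorem IsBM.b_swap {W : PreBM H} (hW : IsBM W) {x y : ℕ} (hx : x ∈ W.G) (hy : y ∈ W.G)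
    (hrow : ∀ h ∈ W.G, W.b x h = W.b y h) {u v : ℕ} (hu : u ∈ W.G) (hv : v ∈ W.G) :
    W.b (Equiv.swap x y u) (Equiv.swap x y v) = W.b u v := by
  have hrow' : ∀ u ∈ W.G, ∀ v ∈ W.G, W.b (Equiv.swap x y u) v = W.b u v := by
    intro u hu v hv
    rw [Equiv.swap_apply_def]
    split_ifs with h₁ h₂
    · rw [h₁, hrow v hv]
    · rw [h₂, hrow v hv]
    · rfl
  have hswap : Equiv.swap x y v ∈ W.G := by
    rw [Equiv.swap_apply_def]
    split_ifs <;> assumption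
  rw [hrow' u hu _ hswap, hW.2.1 u hu _ hswap, hrow' v hv u hu, ← hW.2.1 u hu v hv]

namespace BMIso

variable {T T' T'' : PreBM H}

theorem refl (T : PreBM H) : BMIso T T :=
  ⟨id, Set.bijOn_id _, rfl, fun _ _ _ _ => rfl⟩

theorem trans (h : BMIso T T') (h' : BMIso T' T'') : BMIso T T'' := by
  obtain ⟨f, hf, hfs, hfb⟩ := h
  obtain ⟨f', hf', hfs', hfb'⟩ := h'
  refine ⟨f' ∘ f, hf'.comp hf, by simp [hfs, hfs'], fun g hg h hh => ?_⟩
  simp only [Function.comp_apply, hfb' _ (hf.mapsTo hg) _ (hf.mapsTo hh), hfb g hg h hh]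

theorem symm (hs : T.s ∈ T.G) (h : BMIso T T') : BMIso T' T := by
  obtain ⟨f, hf, hfs, hfb⟩ := h
  have hinv := hf.invOn_invFunOn
  have hf' := hf.symm hinv.symm
  refine ⟨Function.invFunOn f T.G, hf', ?_, fun g hg h hh => ?_⟩
  · rw [← hfs]
    exact hinv.1 (mem_coe.2 hs)
  · rw [← hfb _ (hf'.mapsTo hg) _ (hf'.mapsTo hh), hinv.2 hg, hinv.2 hh]

theorem isBM (h : BMIso T T') (hT : IsBM T) : IsBM T' := by
  obtain ⟨f, hf, hfs, hfb⟩ := h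
  refine ⟨hfs ▸ hf.mapsTo (mem_coe.2 hT.1), fun g hg h hh => ?_, fun g hg => ?_⟩
  · obtain ⟨x, hx, rfl⟩ := hf.surjOn hg
    obtain ⟨y, hy, rfl⟩ := hf.surjOn hh
    rw [hfb x hx y hy, hfb y hy x hx, hT.2.1 x hx y hy]
  · obtain ⟨x, hx, rfl⟩ := hf.surjOn hg
    rw [hfb x hx x hx, hT.2.2 x hx]

theorem of_isSubmatrix {W : PreBM H} (h : T.IsSubmatrix W) (h' : T'.IsSubmatrix W)
    (hG : T.G = T'.G) : BMIso T T' :=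
  ⟨id, hG ▸ Set.bijOn_id _, h.2.1.trans h'.2.1.symm, fun x hx y hy =>
    (h'.2.2 x (hG ▸ hx) y (hG ▸ hy)).trans (h.2.2 x hx y hy).symm⟩

theorem map {f : ℕ → ℕ} (hf : Set.InjOn f T.G) : BMIso T (T.map f) :=
  ⟨f, bijOn_map hf, rfl, fun _ hx _ hy => map_b hf hx hy⟩

end BMIso

/-! ### Common ancestors of homologous based matrices -/

/-- `N` can be removed from `W` by an inverse elementary extension: `N` is a single annihilating
(`c = 0`) or core (`c = 1`) element, or a complementary pair (`c = 1`). -/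
def IsElemSet (W : PreBM H) (N : Finset ℕ) (c : ℕ) : Prop :=
  (#N = 1 ∧ c ≤ 1 ∨ #N = 2 ∧ c = 1) ∧ W.s ∉ N ∧ N ⊆ W.G ∧
    ∀ h ∈ W.G, ∑ g ∈ N, W.b g h = c • W.b W.s h

def ElemExt (T W : PreBM H) : Prop :=
  ∃ N c, IsElemSet W N c ∧ T.IsSubmatrix W ∧ T.G = W.G \ N

theorem IsElemSet.of_isSubmatrix {W C : PreBM H} {N : Finset ℕ} {c : ℕ} (h : IsElemSet W N c)
    (hC : C.IsSubmatrix W) (hs : C.s ∈ C.G) (hN : N ⊆ C.G) : IsElemSet C N c := by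
  obtain ⟨hcard, hsN, -, hsum⟩ := h
  refine ⟨hcard, hC.2.1 ▸ hsN, hN, fun h hh => ?_⟩
  rw [sum_congr rfl fun g hg => hC.2.2 g (hN hg) h hh, hsum h (hC.1 hh), hC.2.2 _ hs h hh,
    hC.2.1]

theorem IsElemSet.image {W W' : PreBM H} {N : Finset ℕ} {c : ℕ} {f : ℕ → ℕ}
    (h : IsElemSet W N c) (hs : W.s ∈ W.G) (hf : Set.BijOn f W.G W'.G) (hfs : f W.s = W'.s)
    (hfb : ∀ x ∈ W.G, ∀ y ∈ W.G, W'.b (f x) (f y) = W.b x y) :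
    IsElemSet W' (N.image f) c := by
  classical
  obtain ⟨hcard, hsN, hNW, hsum⟩ := h
  have hinj : Set.InjOn f N := hf.injOn.mono (by exact_mod_cast hNW)
  refine ⟨by rwa [card_image_of_injOn hinj], fun hs' => ?_, fun y hy => ?_, fun h hh => ?_⟩
  · obtain ⟨g, hg, hfg⟩ := mem_image.1 hs'
    exact hsN (hf.injOn (hNW hg) (mem_coe.2 hs) (hfg.trans hfs.symm) ▸ hg)
  · obtain ⟨g, hg, rfl⟩ := mem_image.1 hy
    exact hf.mapsTo (hNW hg)
  · obtain ⟨h, hh', rfl⟩ := hf.surjOn hh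
    rw [sum_image hinj, sum_congr rfl fun g hg => hfb g (hNW hg) h hh', hsum h hh', ← hfs,
      hfb _ hs h hh']

theorem ElemExt.of_union {T W : PreBM H} {N : Finset ℕ} {c : ℕ} (hT : T.s ∈ T.G)
    (hs : W.s = T.s) (hNT : Disjoint N T.G) (hG : W.G = N ∪ T.G)
    (hb : ∀ x ∈ T.G, ∀ y ∈ T.G, W.b x y = T.b x y) (hcard : #N = 1 ∧ c ≤ 1 ∨ #N = 2 ∧ c = 1)
    (hsum : ∀ h ∈ W.G, ∑ g ∈ N, W.b g h = c • W.b W.s h) : ElemExt T W := by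
  refine ⟨N, c, ⟨hcard, fun h => disjoint_left.1 hNT h (hs ▸ hT), hG ▸ subset_union_left, hsum⟩,
    ⟨hG ▸ subset_union_right, hs.symm, fun x hx y hy => (hb x hx y hy).symm⟩, ?_⟩
  rw [hG, union_sdiff_left, sdiff_eq_self_of_disjoint hNT.symm]

theorem ElemExt.of_isSubmatrix {W C D : PreBM H} {N : Finset ℕ} {c : ℕ} (h : IsElemSet W N c)
    (hC : C.IsSubmatrix W) (hD : D.IsSubmatrix W) (hs : C.s ∈ C.G) (hN : N ⊆ C.G)
    (hG : D.G = C.G \ N) : ElemExt D C := by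
  have hDC : D.G ⊆ C.G := hG ▸ sdiff_subset
  exact ⟨N, c, h.of_isSubmatrix hC hs hN, ⟨hDC, hD.2.1.trans hC.2.1.symm, fun x hx y hy =>
    (hD.2.2 x hx y hy).trans (hC.2.2 x (hDC hx) y (hDC hy)).symm⟩, hG⟩

theorem stepExt_iff {T W : PreBM H} : StepExt T W ↔ IsBM T ∧ IsBM W ∧ ElemExt T W := by
  classical
  constructor
  · rintro ⟨hT, hW, ⟨hs, g, hg, hG, hb, hann⟩ | ⟨hs, g, hg, hG, hb, hcore⟩ |
      ⟨hs, g₁, g₂, hg₁, hg₂, hne, hG, hb, hpair⟩⟩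
    · refine ⟨hT, hW, .of_union hT.1 hs (disjoint_singleton_left.2 hg) (by rw [hG, insert_eq])
        hb (Or.inl ⟨card_singleton g, zero_le_one⟩) fun h hh => ?_⟩
      simp [hann h hh]
    · refine ⟨hT, hW, .of_union hT.1 hs (disjoint_singleton_left.2 hg) (by rw [hG, insert_eq])
        hb (Or.inl ⟨card_singleton g, le_rfl⟩) fun h hh => ?_⟩
      simp [hcore h hh]
    · refine ⟨hT, hW, .of_union hT.1 hs (by simp [hg₁, hg₂]) (by rw [hG]; ext; simp) hb
        (Or.inr ⟨card_pair hne, rfl⟩) fun h hh => ?_⟩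
      simp [sum_pair hne, hpair h hh]
  · rintro ⟨hT, hW, N, c, ⟨hcard, -, hNW, hsum⟩, ⟨-, hs, hsub⟩, hG⟩
    have hb : ∀ x ∈ T.G, ∀ y ∈ T.G, W.b x y = T.b x y := fun x hx y hy => (hsub x hx y hy).symm
    refine ⟨hT, hW, ?_⟩
    rcases hcard with ⟨h1, hc⟩ | ⟨h2, rfl⟩
    · obtain ⟨g, rfl⟩ := card_eq_one.1 h1
      have hgT : g ∉ T.G := by simp [hG]
      have hins : W.G = insert g T.G := by
        rw [hG, insert_sdiff_self_of_mem (hNW (mem_singleton_self g))]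
      interval_cases c
      · exact Or.inl ⟨hs.symm, g, hgT, hins, hb, fun h hh => by simpa using hsum h hh⟩
      · exact Or.inr (Or.inl ⟨hs.symm, g, hgT, hins, hb, fun h hh => by simpa using hsum h hh⟩)
    · obtain ⟨g₁, g₂, hne, rfl⟩ := card_eq_two.1 h2
      refine Or.inr (Or.inr ⟨hs.symm, g₁, g₂, by simp [hG], by simp [hG], hne, ?_, hb,
        fun h hh => by simpa [sum_pair hne] using hsum h hh⟩)
      rw [hG]
      ext x
      have := @hNW x
      simp only [mem_insert, mem_singleton, mem_sdiff] at this ⊢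
      tauto

def HomStep (T T' : PreBM H) : Prop :=
  StepExt T T' ∨ (IsBM T ∧ IsBM T' ∧ BMIso T T')

namespace HomStep

variable {T W : PreBM H}

theorem isBM_left (h : HomStep T W) : IsBM T := by
  rcases h with h | h
  exacts [h.1, h.1]

theorem isBM_right (h : HomStep T W) : IsBM W := by
  rcases h with h | h
  exacts [h.2.1, h.2.1]

theorem of_elemExt (hT : IsBM T) (hW : IsBM W) (h : ElemExt T W) : HomStep T W :=
  Or.inl (stepExt_iff.2 ⟨hT, hW, h⟩)

theorem of_iso (hT : IsBM T) (hW : IsBM W) (h : BMIso T W) : HomStep T W :=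
  Or.inr ⟨hT, hW, h⟩

end HomStep

theorem IsBM.of_ancestor {V T : PreBM H} (hT : IsBM T) (h : ReflTransGen HomStep V T) :
    IsBM V := by
  rcases h.cases_head with rfl | ⟨W, hVW, -⟩
  exacts [hT, hVW.isBM_left]

section Diamond

variable {W C₁ C₂ : PreBM H} {N₁ N₂ : Finset ℕ} {a x y c₁ c₂ : ℕ}

theorem exists_homStep_of_disjoint (hW : IsBM W) (hC₁ : IsBM C₁) (hC₂ : IsBM C₂)
    (h₁ : IsElemSet W N₁ c₁) (h₂ : IsElemSet W N₂ c₂) (hdisj : Disjoint N₁ N₂)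
    (hsub₁ : C₁.IsSubmatrix W) (hsub₂ : C₂.IsSubmatrix W) (hG₁ : C₁.G = W.G \ N₁)
    (hG₂ : C₂.G = W.G \ N₂) : ∃ D, HomStep D C₁ ∧ HomStep D C₂ := by
  set D := W.restrict ((W.G \ N₁) \ N₂)
  have hDsub : D.IsSubmatrix W := isSubmatrix_restrict (sdiff_subset.trans sdiff_subset)
  have hD : IsBM D := hW.of_isSubmatrix hDsub (mem_sdiff.2 ⟨mem_sdiff.2 ⟨hW.1, h₁.2.1⟩, h₂.2.1⟩)
  have hN₂ : N₂ ⊆ C₁.G := hG₁ ▸ subset_sdiff.2 ⟨h₂.2.2.1, hdisj.symm⟩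
  have hN₁ : N₁ ⊆ C₂.G := hG₂ ▸ subset_sdiff.2 ⟨h₁.2.2.1, hdisj⟩
  refine ⟨D, .of_elemExt hD hC₁ (.of_isSubmatrix h₂ hsub₁ hDsub hC₁.1 hN₂ ?_),
    .of_elemExt hD hC₂ (.of_isSubmatrix h₁ hsub₂ hDsub hC₂.1 hN₁ ?_)⟩
  · rw [hG₁]
    rfl
  · rw [hG₂]
    exact sdiff_sdiff_comm

theorem elemExt_of_single_of_pair (h₁ : IsElemSet W {a} c₁) (h₂ : IsElemSet W {a, x} 1)
    (hax : a ≠ x) (hsub₁ : C₁.IsSubmatrix W) (hsub₂ : C₂.IsSubmatrix W) (hs₁ : C₁.s ∈ C₁.G)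
    (hG₁ : C₁.G = W.G \ {a}) (hG₂ : C₂.G = W.G \ {a, x}) : ElemExt C₂ C₁ := by
  obtain ⟨hcard, -, -, hsum₁⟩ := h₁
  obtain ⟨-, hs₂, hN₂, hsum₂⟩ := h₂
  have hc₁ : c₁ ≤ 1 := by simpa using hcard
  have hNx : IsElemSet W {x} (1 - c₁) := by
    refine ⟨Or.inl ⟨card_singleton x, Nat.sub_le 1 c₁⟩, by simp_all,
      by simp_all [insert_subset_iff], fun h hh => ?_⟩
    have e₁ := hsum₁ h hh
    have e₂ := hsum₂ h hh
    rw [sum_singleton] at e₁ ⊢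
    rw [sum_pair hax, one_smul, e₁] at e₂
    rw [sub_nsmul _ hc₁, one_smul]
    exact eq_add_neg_of_add_eq (by rwa [add_comm] at e₂)
  have hxC₁ : x ∈ C₁.G := hG₁ ▸ mem_sdiff.2 ⟨hN₂ (by simp), by simpa using hax.symm⟩
  refine .of_isSubmatrix hNx hsub₁ hsub₂ hs₁ (singleton_subset_iff.2 hxC₁) ?_
  rw [hG₁, hG₂, sdiff_sdiff_left]
  rfl

theorem bmIso_of_pair_of_pair (hW : IsBM W) (h₁ : IsElemSet W {a, x} 1)
    (h₂ : IsElemSet W {a, y} 1) (hax : a ≠ x) (hay : a ≠ y) (hxy : x ≠ y)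
    (hsub₁ : C₁.IsSubmatrix W) (hsub₂ : C₂.IsSubmatrix W) (hG₁ : C₁.G = W.G \ {a, x})
    (hG₂ : C₂.G = W.G \ {a, y}) : BMIso C₁ C₂ := by
  obtain ⟨-, hs₁, hN₁, hsum₁⟩ := h₁
  obtain ⟨-, hs₂, hN₂, hsum₂⟩ := h₂
  have hx : x ∈ W.G := hN₁ (by simp)
  have hy : y ∈ W.G := hN₂ (by simp)
  have hrow : ∀ h ∈ W.G, W.b x h = W.b y h := by
    intro h hh
    have e₁ := hsum₁ h hh
    have e₂ := hsum₂ h hh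
    rw [sum_pair hax] at e₁
    rw [sum_pair hay] at e₂
    exact add_left_cancel (e₁.trans e₂.symm)
  have hmaps : Set.MapsTo (Equiv.swap x y) C₁.G C₂.G := by
    rw [hG₁, hG₂]
    exact Equiv.mapsTo_swap_sdiff_pair hx hax.symm hxy
  refine ⟨Equiv.swap x y, ?_, ?_, fun u hu v hv => ?_⟩
  · refine Set.InvOn.bijOn ⟨fun u _ => Equiv.swap_apply_self _ _ _,
      fun u _ => Equiv.swap_apply_self _ _ _⟩ hmaps ?_
    rw [hG₁, hG₂, Equiv.swap_comm]
    exact Equiv.mapsTo_swap_sdiff_pair hy hay.symm hxy.symm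
  · rw [hsub₁.2.1, hsub₂.2.1, Equiv.swap_apply_of_ne_of_ne] <;> grind
  · rw [hsub₂.2.2 _ (hmaps hu) _ (hmaps hv), hsub₁.2.2 u hu v hv,
      hW.b_swap hx hy hrow (hsub₁.1 hu) (hsub₁.1 hv)]

theorem ElemExt.confluent (hW : IsBM W) (hC₁ : IsBM C₁) (hC₂ : IsBM C₂) (h₁ : ElemExt C₁ W)
    (h₂ : ElemExt C₂ W) : HomStep C₁ C₂ ∨ HomStep C₂ C₁ ∨ ∃ D, HomStep D C₁ ∧ HomStep D C₂ := by
  classical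
  obtain ⟨N₁, c₁, hN₁, hsub₁, hG₁⟩ := h₁
  obtain ⟨N₂, c₂, hN₂, hsub₂, hG₂⟩ := h₂
  by_cases heq : N₁ = N₂
  · exact Or.inl (.of_iso hC₁ hC₂ (.of_isSubmatrix hsub₁ hsub₂ (by rw [hG₁, hG₂, heq])))
  by_cases hdisj : Disjoint N₁ N₂
  · exact Or.inr (Or.inr
      (exists_homStep_of_disjoint hW hC₁ hC₂ hN₁ hN₂ hdisj hsub₁ hsub₂ hG₁ hG₂))
  obtain ⟨a, ha₁, ha₂⟩ := not_disjoint_iff.1 hdisj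
  have eq_single : ∀ {N : Finset ℕ}, #N = 1 → a ∈ N → N = {a} := fun h ha =>
    eq_singleton_iff_unique_mem.2 ⟨ha, fun b hb => card_le_one.1 h.le b hb a ha⟩
  rcases hN₁.1 with ⟨h1, -⟩ | ⟨h1, rfl⟩ <;> rcases hN₂.1 with ⟨h2, -⟩ | ⟨h2, rfl⟩
  · exact absurd ((eq_single h1 ha₁).trans (eq_single h2 ha₂).symm) heq
  · obtain ⟨x, hxa, rfl⟩ := exists_eq_pair_of_card_eq_two h2 ha₂
    rw [eq_single h1 ha₁] at hN₁ hG₁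
    exact Or.inr (Or.inl (.of_elemExt hC₂ hC₁
      (elemExt_of_single_of_pair hN₁ hN₂ hxa.symm hsub₁ hsub₂ hC₁.1 hG₁ hG₂)))
  · obtain ⟨x, hxa, rfl⟩ := exists_eq_pair_of_card_eq_two h1 ha₁
    rw [eq_single h2 ha₂] at hN₂ hG₂
    exact Or.inl (.of_elemExt hC₁ hC₂
      (elemExt_of_single_of_pair hN₂ hN₁ hxa.symm hsub₂ hsub₁ hC₂.1 hG₂ hG₁))
  · obtain ⟨x, hxa, rfl⟩ := exists_eq_pair_of_card_eq_two h1 ha₁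
    obtain ⟨y, hya, rfl⟩ := exists_eq_pair_of_card_eq_two h2 ha₂
    have hxy : x ≠ y := by
      rintro rfl
      exact heq rfl
    exact Or.inl (.of_iso hC₁ hC₂
      (bmIso_of_pair_of_pair hW hN₁ hN₂ hxa.symm hya.symm hxy hsub₁ hsub₂ hG₁ hG₂))

end Diamond

theorem ElemExt.exists_of_bmIso {C W W' : PreBM H} (h : ElemExt C W) (hW : W.s ∈ W.G)
    (hiso : BMIso W W') : ∃ D, ElemExt D W' ∧ BMIso C D := by
  classical
  obtain ⟨N, c, hN, hsub, hG⟩ := h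
  obtain ⟨f, hf, hfs, hfb⟩ := hiso
  refine ⟨W'.restrict (W'.G \ N.image f),
    ⟨N.image f, c, hN.image hW hf hfs hfb, isSubmatrix_restrict sdiff_subset, rfl⟩,
    f, ?_, by rw [hsub.2.1, hfs]; rfl, fun u hu v hv => ?_⟩
  · change Set.BijOn f ↑C.G ↑(W'.G \ N.image f)
    rw [hG]
    push_cast
    exact hf.sdiff_of_subset (by exact_mod_cast hN.2.2.1)
  · rw [hsub.2.2 u hu v hv]
    exact hfb u (hsub.1 hu) v (hsub.1 hv)

theorem HomStep.exists_of_bmIso_of_elemExt {W C₁ C₂ : PreBM H} (hW : IsBM W) (hC₁ : IsBM C₁)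
    (hC₂ : IsBM C₂) (h₁ : BMIso C₁ W) (h₂ : ElemExt C₂ W) :
    ∃ D, HomStep D C₁ ∧ HomStep D C₂ := by
  obtain ⟨D, hDC₁, hC₂D⟩ := h₂.exists_of_bmIso hW.1 (h₁.symm hC₁.1)
  have hD : IsBM D := hC₂D.isBM hC₂
  exact ⟨D, .of_elemExt hD hC₁ hDC₁, .of_iso hD hC₂ (hC₂D.symm hC₂.1)⟩

theorem HomStep.confluent {W C₁ C₂ : PreBM H} (h₁ : HomStep C₁ W) (h₂ : HomStep C₂ W) :
    HomStep C₁ C₂ ∨ HomStep C₂ C₁ ∨ ∃ D, HomStep D C₁ ∧ HomStep D C₂ := by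
  have hC₁ := h₁.isBM_left
  have hC₂ := h₂.isBM_left
  have hW := h₁.isBM_right
  rcases h₁ with h₁ | ⟨-, -, h₁⟩ <;> rcases h₂ with h₂ | ⟨-, -, h₂⟩
  · exact (stepExt_iff.1 h₁).2.2.confluent hW hC₁ hC₂ (stepExt_iff.1 h₂).2.2
  · obtain ⟨D, hD₂, hD₁⟩ := exists_of_bmIso_of_elemExt hW hC₂ hC₁ h₂ (stepExt_iff.1 h₁).2.2
    exact Or.inr (Or.inr ⟨D, hD₁, hD₂⟩)
  · exact Or.inr (Or.inr (exists_of_bmIso_of_elemExt hW hC₁ hC₂ h₁ (stepExt_iff.1 h₂).2.2))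
  · exact Or.inl (.of_iso hC₁ hC₂ (h₁.trans (h₂.symm hC₂.1)))

theorem Homologous.exists_common_ancestor {T U : PreBM H} (h : Homologous T U) :
    ∃ V, ReflTransGen HomStep V T ∧ ReflTransGen HomStep V U := by
  have hconf : ∀ W C₁ C₂ : PreBM H, Function.swap HomStep W C₁ → Function.swap HomStep W C₂ →
      ∃ D, ReflGen (Function.swap HomStep) C₁ D ∧ ReflTransGen (Function.swap HomStep) C₂ D := by
    intro W C₁ C₂ h₁ h₂
    rcases HomStep.confluent h₁ h₂ with h | h | ⟨D, hD₁, hD₂⟩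
    · exact ⟨C₁, ReflGen.refl, ReflTransGen.single h⟩
    · exact ⟨C₂, ReflGen.single h, ReflTransGen.refl⟩
    · exact ⟨D, ReflGen.single hD₁, ReflTransGen.single hD₂⟩
  have hjoin : EqvGen (HomStep (H := H)) ≤ Join (ReflTransGen (Function.swap HomStep)) := by
    rw [← (equivalence_join_reflTransGen hconf).eqvGen_eq]
    exact EqvGen.mono fun a b hab => ⟨a, ReflTransGen.refl, ReflTransGen.single hab⟩
  obtain ⟨V, hTV, hUV⟩ := hjoin T U h
  exact ⟨V, reflTransGen_swap.1 hTV, reflTransGen_swap.1 hUV⟩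

theorem ElemExt.exists_fresh {B C B₀ : PreBM H} (h : ElemExt B C) (hC : C.s ∈ C.G)
    (hiso : BMIso B B₀) (S : Finset ℕ) :
    ∃ C₀, ElemExt B₀ C₀ ∧ BMIso C C₀ ∧ Disjoint S (C₀.G \ B₀.G) := by
  classical
  obtain ⟨N, c, hN, hsub, hG⟩ := h
  obtain ⟨f, hf, hfs, hfb⟩ := hiso
  set m := (S ∪ B₀.G).sup id + 1
  have hm : ∀ x ∈ S ∪ B₀.G, x < m := fun x hx => Nat.lt_succ_of_le (le_sup (f := id) hx)
  -- `N` is moved beyond `S` and `B₀.G`, and `B.G = C.G \ N` follows `f`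
  set φ : ℕ → ℕ := fun x => if x ∈ N then x + m else f x
  have hφB : ∀ x ∈ B.G, φ x = f x := fun x hx => if_neg (mem_sdiff.1 (hG ▸ hx)).2
  have hφ : Set.InjOn φ C.G := Set.injOn_ite_add (hG ▸ hf.injOn) fun x hx =>
    hm _ (mem_union_right _ (hf.mapsTo (hG ▸ hx)))
  have hB₀ : B₀.G = (C.map φ).G \ N.image φ := by
    rw [PreBM.map, ← image_sdiff_of_injOn hφ hN.2.2.1, ← hG, image_congr hφB, ← coe_inj,
      coe_image, hf.image_eq]
  have hBs : B.s ∈ B.G := hG ▸ mem_sdiff.2 ⟨hsub.2.1 ▸ hC, hsub.2.1 ▸ hN.2.1⟩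
  refine ⟨C.map φ, ⟨N.image φ, c, hN.image hC (bijOn_map hφ) rfl fun x hx y hy => map_b hφ hx hy,
    ⟨hB₀ ▸ sdiff_subset, ?_, fun x hx y hy => ?_⟩, hB₀⟩, .map hφ, ?_⟩
  · rw [← hfs, ← hφB _ hBs, hsub.2.1]
    rfl
  · obtain ⟨u, hu, rfl⟩ := hf.surjOn hx
    obtain ⟨v, hv, rfl⟩ := hf.surjOn hy
    rw [hfb u hu v hv, ← hφB u hu, ← hφB v hv, map_b hφ (hsub.1 hu) (hsub.1 hv),
      hsub.2.2 u hu v hv]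
  · refine disjoint_left.2 fun z hzS hz => ?_
    obtain ⟨⟨x, hx, rfl⟩, hz₀⟩ := (mem_sdiff.1 hz).imp_left mem_image.1
    by_cases hxN : x ∈ N
    · have := hm _ (mem_union_left _ hzS)
      simp only [φ, hxN, if_true] at this
      omega
    · have hxB : x ∈ B.G := hG ▸ mem_sdiff.2 ⟨hx, hxN⟩
      exact hz₀ (hφB x hxB ▸ hf.mapsTo hxB)

/-! ### Isotropic fillings -/

@[simp]
theorem negBM_G (T : PreBM R) : (negBM T).G = T.G := rfl

@[simp]
theorem negBM_s (T : PreBM R) : (negBM T).s = T.s := rfl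

theorem Finsupp.sum_support_ite_mul (v : ℕ →₀ R) (S : Finset ℕ) (F : ℕ → R) :
    ∑ x ∈ v.support, (if x ∈ S then v x * F x else 0) = ∑ x ∈ S, v x * F x := by
  classical
  rw [← Finset.sum_filter]
  exact Finset.sum_subset (fun x hx => (mem_filter.1 hx).2) fun x hxS hx => by simp_all

theorem Finsupp.sum_support_sum_support_ite_mul (v w : ℕ →₀ R) (S : Finset ℕ) (f : ℕ → ℕ → R) :
    ∑ x ∈ v.support, ∑ y ∈ w.support, v x * w y * (if x ∈ S ∧ y ∈ S then f x y else 0) =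
      ∑ x ∈ S, ∑ y ∈ S, v x * w y * f x y := by
  calc _ = ∑ x ∈ v.support, if x ∈ S then
        v x * ∑ y ∈ w.support, (if y ∈ S then w y * f x y else 0) else 0 := by
        refine Finset.sum_congr rfl fun x _ => ?_
        split_ifs with hx <;> simp [hx, Finset.mul_sum, mul_assoc]
    _ = _ := by
        simp_rw [sum_support_ite_mul, Finset.mul_sum, mul_assoc]

namespace PreBM

variable {T : PreBM R} {v v' w w' : ℕ →₀ R}

/-- The summand of `blockB` belonging to `T`, as a bilinear form on `Λ`. -/
noncomputable def bForm (T : PreBM R) : (ℕ →₀ R) →ₗ[R] (ℕ →₀ R) →ₗ[R] R :=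
  LinearMap.mk₂ R (fun v w => ∑ x ∈ T.G, ∑ y ∈ T.G, v x * w y * T.b x y)
    (fun v v' w => by simp only [Finsupp.add_apply, add_mul, sum_add_distrib])
    (fun r v w => by simp only [Finsupp.smul_apply, smul_eq_mul, mul_sum, mul_assoc])
    (fun v w w' => by simp only [Finsupp.add_apply, mul_add, add_mul, sum_add_distrib])
    (fun r v w => by
      simp only [Finsupp.smul_apply, smul_eq_mul, mul_sum]
      exact sum_congr rfl fun _ _ => sum_congr rfl fun _ _ => by ring)

theorem bForm_apply (T : PreBM R) (v w : ℕ →₀ R) :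
    T.bForm v w = ∑ x ∈ T.G, ∑ y ∈ T.G, v x * w y * T.b x y := rfl

theorem bForm_congr (hv : ∀ x ∈ T.G, v x = v' x) (hw : ∀ y ∈ T.G, w y = w' y) :
    T.bForm v w = T.bForm v' w' := by
  simp only [bForm_apply]
  exact sum_congr rfl fun x hx => sum_congr rfl fun y hy => by rw [hv x hx, hw y hy]

theorem bForm_single_single {g h : ℕ} (hg : g ∈ T.G) (hh : h ∈ T.G) :
    T.bForm (Finsupp.single g 1) (Finsupp.single h 1) = T.b g h := by
  simp [bForm_apply, Finsupp.single_apply, hg, hh]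

theorem bForm_single_left {g : ℕ} (hg : g ∈ T.G) (w : ℕ →₀ R) :
    T.bForm (Finsupp.single g 1) w = ∑ y ∈ T.G, w y * T.b g y := by
  simp [bForm_apply, Finsupp.single_apply, hg]

theorem bForm_eq_zero_of_left (hv : ∀ x ∈ T.G, v x = 0) : T.bForm v w = 0 := by
  simp +contextual [bForm_apply, hv]

theorem bForm_swap (hT : IsBM T) (v w : ℕ →₀ R) : T.bForm v w = -T.bForm w v := by
  rw [bForm_apply, bForm_apply, sum_comm, ← sum_neg_distrib]
  refine sum_congr rfl fun y hy => ?_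
  rw [← sum_neg_distrib]
  refine sum_congr rfl fun x hx => ?_
  rw [hT.2.1 y hy x hx]
  ring

theorem bForm_negBM (T : PreBM R) (v w : ℕ →₀ R) : (negBM T).bForm v w = -T.bForm v w := by
  simp [bForm_apply, negBM]

theorem bForm_of_isSubmatrix {B : PreBM R} (h : T.IsSubmatrix B) (hv : ∀ x ∈ B.G \ T.G, v x = 0)
    (hw : ∀ y ∈ B.G \ T.G, w y = 0) : B.bForm v w = T.bForm v w := by
  rw [bForm_apply, bForm_apply, ← sum_subset h.1 fun x hx hxT => ?_]
  · refine sum_congr rfl fun x hx => ?_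
    rw [← sum_subset h.1 fun y hy hyT => ?_]
    · exact sum_congr rfl fun y hy => by rw [h.2.2 x hx y hy]
    · simp [hw y (mem_sdiff.2 ⟨hy, hyT⟩)]
  · simp [hv x (mem_sdiff.2 ⟨hx, hxT⟩)]

end PreBM

theorem blockB_eq_sum (L : List (PreBM R)) (v w : ℕ →₀ R) :
    blockB L v w = (L.map fun T => T.bForm v w).sum := by
  induction L with
  | nil => simp [blockB]
  | cons T L ih =>
    rw [List.map_cons, List.sum_cons, ← ih, bForm_apply,
      ← Finsupp.sum_support_sum_support_ite_mul]
    simp only [blockB, List.map_cons, List.sum_cons, mul_add, sum_add_distrib]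

theorem blockB_pair (A B : PreBM R) (v w : ℕ →₀ R) :
    blockB [A, B] v w = A.bForm v w + B.bForm v w := by
  simp [blockB_eq_sum]

theorem blockB_pair_negBM_swap {A B : PreBM R} (hA : IsBM A) (hB : IsBM B) (v w : ℕ →₀ R) :
    blockB [A, negBM B] v w = -blockB [A, negBM B] w v := by
  rw [blockB_pair, blockB_pair, bForm_negBM, bForm_negBM, A.bForm_swap hA, B.bForm_swap hB]
  ring

section Fillings

variable {L L' : List (PreBM R)} {x : ℕ →₀ R}

theorem mem_allG {g : ℕ} : g ∈ allG L ↔ ∃ T ∈ L, g ∈ T.G := by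
  induction L with
  | nil => simp [allG]
  | cons T L ih => simp_all [allG]

theorem allG_pair (A B : PreBM R) : allG [A, B] = A.G ∪ B.G := by
  simp [allG]

theorem sVec_pair (A B : PreBM R) :
    sVec [A, B] = Finsupp.single A.s 1 + Finsupp.single B.s 1 := by
  simp [sVec]

theorem sSpan_pair (A B : PreBM R) :
    sSpan [A, B] = Submodule.span R {Finsupp.single A.s 1, Finsupp.single B.s 1} := by
  rw [sSpan]
  congr 1
  ext v
  simp [eq_comm]

theorem single_s_mem_sSpan {T : PreBM R} (hT : T ∈ L) : Finsupp.single T.s 1 ∈ sSpan L :=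
  Submodule.subset_span ⟨T, hT, rfl⟩

theorem sVec_mem_sSpan (L : List (PreBM R)) : sVec L ∈ sSpan L :=
  list_sum_mem fun _ hv => by
    obtain ⟨T, hT, rfl⟩ := List.mem_map.1 hv
    exact single_s_mem_sSpan hT

theorem apply_eq_zero_of_mem_sSpan (hL : ∀ T ∈ L, T.s ∈ T.G) (hx : x ∈ sSpan L) {g : ℕ}
    (hg : g ∉ allG L) : x g = 0 := by
  induction hx using Submodule.span_induction with
  | mem v hv =>
    obtain ⟨T, hT, rfl⟩ := hv
    exact Finsupp.single_eq_of_ne fun h => hg (mem_allG.2 ⟨T, hT, h ▸ hL T hT⟩)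
  | zero => rfl
  | add x y _ _ hx hy => simp [hx, hy]
  | smul r x _ hx => simp [hx]

theorem ShortVec.apply_eq_zero (hL : ∀ T ∈ L, T.s ∈ T.G) (h : ShortVec L x) {g : ℕ}
    (hg : g ∉ allG L) : x g = 0 := by
  have hne : ∀ {h}, h ∈ allG L → Finsupp.single h (1 : R) g = 0 := fun hh =>
    Finsupp.single_eq_of_ne fun h => hg (h ▸ hh)
  rcases h with h | ⟨h, hh, -, h⟩ | ⟨h, hh, h', hh', -, -, h⟩
  · exact apply_eq_zero_of_mem_sSpan hL h hg
  · simpa [hne hh] using apply_eq_zero_of_mem_sSpan hL h hg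
  · simpa [hne hh, hne hh'] using apply_eq_zero_of_mem_sSpan hL h hg

theorem ShortVec.mono (hG : allG L ⊆ allG L') (hspan : sSpan L = sSpan L')
    (hbase : ∀ T' ∈ L', ∃ T ∈ L, T'.s = T.s) (h : ShortVec L x) : ShortVec L' x := by
  have hs : ∀ {g}, (∀ T ∈ L, g ≠ T.s) → ∀ T' ∈ L', g ≠ T'.s := fun hg T' hT' => by
    obtain ⟨T, hT, hss⟩ := hbase T' hT'
    exact hss ▸ hg T hT
  rw [ShortVec, ← hspan]
  rcases h with h | ⟨g, hg, hgs, h⟩ | ⟨g, hg, h, hh, hne, hgs, hx⟩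
  · exact Or.inl h
  · exact Or.inr (Or.inl ⟨g, hG hg, hs hgs, h⟩)
  · exact Or.inr (Or.inr ⟨g, hG hg, h, hG hh, hne, fun T' hT' =>
      ⟨hs (fun T hT => (hgs T hT).1) T' hT', hs (fun T hT => (hgs T hT).2) T' hT'⟩, hx⟩)

theorem ShortVec.single_add_single {A B : PreBM R} (hAB : Disjoint A.G B.G) (hA : A.s ∈ A.G)
    (hB : B.s ∈ B.G) {g h : ℕ} (hg : g ∈ A.G) (hh : h ∈ B.G) (hgs : g ≠ A.s) (hhs : h ≠ B.s) :
    ShortVec [A, B] (Finsupp.single g 1 + Finsupp.single h 1) := by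
  have hgB : g ≠ B.s := fun e => disjoint_left.1 hAB hg (e ▸ hB)
  have hhA : h ≠ A.s := fun e => disjoint_left.1 hAB (e ▸ hA) hh
  refine Or.inr (Or.inr ⟨g, by simp [allG_pair, hg], h, by simp [allG_pair, hh],
    fun e => disjoint_left.1 hAB hg (e ▸ hh), by simp [*], by simp⟩)

def HasIsotropicFilling (L : List (PreBM R)) : Prop :=
  ∃ (k : ℕ) (lam : Fin k → (ℕ →₀ R)), IsFilling L lam ∧ ∀ i j, blockB L (lam i) (lam j) = 0

theorem HasIsotropicFilling.tupleGenus_eq_zero (h : HasIsotropicFilling L) :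
    tupleGenus L = 0 := by
  obtain ⟨k, lam, hfill, hzero⟩ := h
  refine Nat.sInf_eq_zero.2 (Or.inl ⟨k, lam, hfill, ?_⟩)
  have : (Matrix.of fun i j : Fin k => blockB L (lam i) (lam j)) = 0 := by
    ext i j
    exact hzero i j
  rw [this, Matrix.rank_zero]

theorem hasIsotropicFilling_of_fintype {ι : Type*} [Fintype ι] (lam : ι → ℕ →₀ R)
    (hshort : ∀ i, ShortVec L (lam i)) (hs : ∃ i, lam i = sVec L)
    (hsum : ∑ i, lam i - ∑ g ∈ allG L, Finsupp.single g 1 ∈ sSpan L)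
    (hzero : ∀ i j, blockB L (lam i) (lam j) = 0) : HasIsotropicFilling L := by
  let e := Fintype.equivFin ι
  obtain ⟨i₀, hi₀⟩ := hs
  refine ⟨_, lam ∘ e.symm, ⟨fun i => hshort _, ⟨e i₀, by simpa using hi₀⟩, ?_⟩,
    fun i j => hzero _ _⟩
  rwa [Function.comp_def, Equiv.sum_comp e.symm lam]

end Fillings

section Diagonal

variable {T : PreBM R} {f : ℕ → ℕ}

theorem blockB_diagonal (hf : Set.InjOn f T.G) (hdisj : Disjoint T.G (T.map f).G) {g h : ℕ}
    (hg : g ∈ T.G) (hh : h ∈ T.G) :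
    blockB [T, negBM (T.map f)] (Finsupp.single g 1 + Finsupp.single (f g) 1)
      (Finsupp.single h 1 + Finsupp.single (f h) 1) = 0 := by
  have hfT : ∀ x ∈ T.G, f x ∈ (T.map f).G := fun x hx => mem_image_of_mem f hx
  have hT : ∀ x ∈ T.G, ∀ g ∈ T.G,
      (Finsupp.single g 1 + Finsupp.single (f g) 1 : ℕ →₀ R) x = Finsupp.single g 1 x :=
    fun x hx g hg => by
      have : f g ≠ x := fun e => disjoint_left.1 hdisj (e ▸ hx) (hfT g hg)
      simp [Finsupp.single_apply, this]
  have hW : ∀ x ∈ (T.map f).G, ∀ g ∈ T.G,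
      (Finsupp.single g 1 + Finsupp.single (f g) 1 : ℕ →₀ R) x = Finsupp.single (f g) 1 x :=
    fun x hx g hg => by
      have : g ≠ x := fun e => disjoint_left.1 hdisj (e ▸ hg) hx
      simp [Finsupp.single_apply, this]
  rw [blockB_pair, bForm_negBM, T.bForm_congr (hT · · g hg) (hT · · h hh),
    (T.map f).bForm_congr (hW · · g hg) (hW · · h hh), bForm_single_single hg hh,
    bForm_single_single (hfT g hg) (hfT h hh), map_b hf hg hh, add_neg_cancel]

theorem hasIsotropicFilling_diagonal (hT : IsBM T) (hf : Set.InjOn f T.G)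
    (hdisj : Disjoint T.G (T.map f).G) : HasIsotropicFilling [T, negBM (T.map f)] := by
  classical
  let d : ℕ → ℕ →₀ R := fun g => Finsupp.single g 1 + Finsupp.single (f g) 1
  have hds : d T.s = sVec [T, negBM (T.map f)] := by
    rw [sVec_pair, negBM_s]
    rfl
  refine hasIsotropicFilling_of_fintype (fun g : T.G => d g) (fun g => ?_) ⟨⟨T.s, hT.1⟩, hds⟩
    ?_ fun g h => blockB_diagonal hf hdisj g.2 h.2
  · by_cases hgs : (g : ℕ) = T.s
    · rw [hgs, hds]
      exact Or.inl (sVec_mem_sSpan _)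
    · exact ShortVec.single_add_single (B := negBM (T.map f)) hdisj hT.1
        (mem_image_of_mem f hT.1) g.2 (mem_image_of_mem f g.2) hgs fun e => hgs (hf g.2 hT.1 e)
  · have : ∑ g ∈ T.G, d g = ∑ g ∈ allG [T, negBM (T.map f)], Finsupp.single g 1 := by
      rw [allG_pair, negBM_G, sum_union hdisj, sum_add_distrib]
      exact congrArg _ (sum_image (f := fun x => Finsupp.single x (1 : R)) hf).symm
    rw [sum_coe_sort T.G d, this, sub_self]
    exact zero_mem _

end Diagonal

theorem HasIsotropicFilling.swap {A B : PreBM R} (h : HasIsotropicFilling [A, negBM B]) :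
    HasIsotropicFilling [B, negBM A] := by
  obtain ⟨k, lam, ⟨hshort, ⟨i₀, hi₀⟩, hsum⟩, hzero⟩ := h
  have hG : allG [A, negBM B] = allG [B, negBM A] := by
    rw [allG_pair, allG_pair, negBM_G, negBM_G, union_comm]
  have hspan : sSpan [A, negBM B] = sSpan [B, negBM A] := by
    rw [sSpan_pair, sSpan_pair, negBM_s, negBM_s, Set.pair_comm]
  refine ⟨k, lam, ⟨fun i => (hshort i).mono hG.le hspan (by simp), ⟨i₀, ?_⟩, ?_⟩, fun i j => ?_⟩
  · rw [hi₀, sVec_pair, sVec_pair, negBM_s, negBM_s, add_comm]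
  · rwa [← hG, ← hspan]
  · have := hzero i j
    rw [blockB_pair, bForm_negBM] at this ⊢
    linear_combination -this

section ElemExt

variable {A B B₂ : PreBM R} {N : Finset ℕ} {c : ℕ}

noncomputable def elemVec (N : Finset ℕ) (c s : ℕ) : ℕ →₀ R :=
  ∑ g ∈ N, Finsupp.single g 1 - c • Finsupp.single s 1

theorem IsElemSet.bForm_elemVec_eq_zero (h : IsElemSet B₂ N c) (hs : B₂.s ∈ B₂.G)
    (w : ℕ →₀ R) : B₂.bForm (elemVec N c B₂.s) w = 0 := by
  obtain ⟨-, -, hNB, hsum⟩ := h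
  calc _ = ∑ y ∈ B₂.G, w y * (∑ g ∈ N, B₂.b g y - c • B₂.b B₂.s y) := by
        simp only [elemVec, map_sub, map_sum, map_nsmul, LinearMap.sub_apply,
          LinearMap.sum_apply, LinearMap.smul_apply, bForm_single_left hs, mul_sub, mul_sum,
          smul_sum, mul_smul_comm, sum_sub_distrib]
        rw [sum_congr rfl fun g hg => bForm_single_left (hNB hg) w, sum_comm]
    _ = 0 := sum_eq_zero fun y hy => by rw [hsum y hy, sub_self, mul_zero]

theorem IsElemSet.blockB_elemVec_eq_zero (h : IsElemSet B₂ N c) (hB₂ : B₂.s ∈ B₂.G)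
    (hdisj : Disjoint A.G B₂.G) (w : ℕ →₀ R) :
    blockB [A, negBM B₂] (elemVec N c B₂.s) w = 0 := by
  classical
  have hA : ∀ x ∈ A.G, (elemVec N c B₂.s : ℕ →₀ R) x = 0 := fun x hx => by
    have hxN : x ∉ N := fun hxN => disjoint_left.1 hdisj hx (h.2.2.1 hxN)
    have hxs : B₂.s ≠ x := fun e => disjoint_left.1 hdisj (e ▸ hx) hB₂
    simp [elemVec, Finsupp.single_apply, hxN, hxs]
  rw [blockB_pair, bForm_negBM, A.bForm_eq_zero_of_left hA, h.bForm_elemVec_eq_zero hB₂,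
    neg_zero, add_zero]

theorem IsElemSet.shortVec_elemVec (h : IsElemSet B₂ N c) (hA : A.s ∈ A.G)
    (hdisj : Disjoint A.G B₂.G) : ShortVec [A, negBM B₂] (elemVec N c B₂.s) := by
  obtain ⟨hcard, hsN, hNB, -⟩ := h
  have hmem : ∀ g ∈ N, g ∈ allG [A, negBM B₂] := fun g hg => by simp [allG_pair, hNB hg]
  have hbase : ∀ g ∈ N, ∀ T ∈ [A, negBM B₂], g ≠ T.s := fun g hg => by
    simp only [List.mem_cons, List.not_mem_nil, or_false, forall_eq_or_imp, forall_eq, negBM_s]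
    exact ⟨fun e => disjoint_left.1 hdisj (e ▸ hA) (hNB hg), fun e => hsN (e ▸ hg)⟩
  have hs : -(c • Finsupp.single B₂.s 1) ∈ sSpan [A, negBM B₂] :=
    neg_mem (nsmul_mem (single_s_mem_sSpan (T := negBM B₂) (by simp)) c)
  rcases hcard with ⟨h1, -⟩ | ⟨h2, -⟩
  · obtain ⟨g, rfl⟩ := card_eq_one.1 h1
    refine Or.inr (Or.inl ⟨g, hmem g (mem_singleton_self g), hbase g (mem_singleton_self g), ?_⟩)
    rw [elemVec, sum_singleton, sub_sub_cancel_left]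
    exact hs
  · obtain ⟨g, g', hne, rfl⟩ := card_eq_two.1 h2
    refine Or.inr (Or.inr ⟨g, hmem g (by simp), g', hmem g' (by simp), hne, fun T hT =>
      ⟨hbase g (by simp) T hT, hbase g' (by simp) T hT⟩, ?_⟩)
    convert hs using 1
    rw [elemVec, sum_pair hne]
    abel

theorem HasIsotropicFilling.of_elemExt (hA : IsBM A) (hB₂ : IsBM B₂) (hdisj : Disjoint A.G B₂.G)
    (hext : ElemExt B B₂) (h : HasIsotropicFilling [A, negBM B]) :
    HasIsotropicFilling [A, negBM B₂] := by
  classical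
  obtain ⟨k, lam, ⟨hshort, ⟨i₀, hi₀⟩, hsum⟩, hzero⟩ := h
  obtain ⟨N, c, hN, hsub, hG⟩ := hext
  have hspan : sSpan [A, negBM B] = sSpan [A, negBM B₂] := by
    rw [sSpan_pair, sSpan_pair, negBM_s, negBM_s, hsub.2.1]
  have hallG : allG [A, negBM B₂] = allG [A, negBM B] ∪ N := by
    rw [allG_pair, allG_pair, negBM_G, negBM_G, union_assoc, hG, sdiff_union_of_subset hN.2.2.1]
  have hNL : Disjoint (allG [A, negBM B]) N := by
    refine disjoint_right.2 fun g hg => ?_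
    simp [allG_pair, hG, hg, disjoint_right.1 hdisj (hN.2.2.1 hg)]
  have hbase : ∀ T ∈ [A, negBM B], T.s ∈ T.G := by
    simp [hA.1, hG, hsub.2.1, hB₂.1, hN.2.1]
  have hvan : ∀ i, ∀ x ∈ B₂.G \ B.G, lam i x = 0 := fun i x hx =>
    (hshort i).apply_eq_zero hbase (disjoint_right.1 hNL (by simp_all))
  have hρ := hN.blockB_elemVec_eq_zero hB₂.1 hdisj
  refine hasIsotropicFilling_of_fintype (fun o => o.elim (elemVec N c B₂.s) lam) ?_
    ⟨some i₀, by rw [Option.elim, hi₀, sVec_pair, sVec_pair, negBM_s, negBM_s, hsub.2.1]⟩ ?_ ?_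
  · rintro (_ | i)
    · exact hN.shortVec_elemVec hA.1 hdisj
    · exact (hshort i).mono (hallG ▸ subset_union_left) hspan (by simp [hsub.2.1])
  · rw [Fintype.sum_option, hallG, sum_union hNL, ← hspan]
    convert add_mem hsum (neg_mem (nsmul_mem (single_s_mem_sSpan (T := negBM B) (by simp)) c))
      using 1
    simp only [elemVec, Option.elim, negBM_s, hsub.2.1]
    abel
  · rintro (_ | i) (_ | j)
    · exact hρ _
    · exact hρ _
    · rw [Option.elim, Option.elim, blockB_pair_negBM_swap hA hB₂, hρ, neg_zero]
    · rw [Option.elim, Option.elim, blockB_pair, bForm_negBM,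
        bForm_of_isSubmatrix hsub (hvan i) (hvan j)]
      simpa [blockB_pair, bForm_negBM] using hzero i j

end ElemExt

def IsotropicCobordant (A B : PreBM R) : Prop :=
  ∃ A' B' : PreBM R, IsBM A' ∧ IsBM B' ∧ BMIso A A' ∧ BMIso B B' ∧
    Disjoint A'.G B'.G ∧ HasIsotropicFilling [A', negBM B']

namespace IsotropicCobordant

variable {A B C : PreBM R}

theorem cobordant (h : IsotropicCobordant A B) : Cobordant A B := by
  obtain ⟨A', B', hA', hB', hA, hB, hdisj, hfill⟩ := h
  exact ⟨A', B', hA', hB', hA, hB, hdisj, hfill.tupleGenus_eq_zero⟩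

theorem refl (hA : IsBM A) : IsotropicCobordant A A := by
  set n := A.G.sup id + 1
  have hinj : Set.InjOn (· + n) A.G := fun a _ b _ h => Nat.add_right_cancel h
  have hdisj : Disjoint A.G (A.map (· + n)).G := by
    refine disjoint_left.2 fun x hx hx' => ?_
    obtain ⟨g, -, rfl⟩ := mem_image.1 hx'
    exact (Nat.lt_succ_of_le (le_sup (f := id) hx)).not_ge (Nat.le_add_left n g)
  exact ⟨A, _, hA, (BMIso.map hinj).isBM hA, .refl A, .map hinj, hdisj,
    hasIsotropicFilling_diagonal hA hinj hdisj⟩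

theorem symm (h : IsotropicCobordant A B) : IsotropicCobordant B A := by
  obtain ⟨A', B', hA', hB', hA, hB, hdisj, hfill⟩ := h
  exact ⟨B', A', hB', hA', hB, hA, hdisj.symm, hfill.swap⟩

theorem of_homStep_right (h : IsotropicCobordant A B) (hBC : HomStep B C) :
    IsotropicCobordant A C := by
  obtain ⟨A', B', hA', hB', hA, hB, hdisj, hfill⟩ := h
  rcases hBC with hext | ⟨hBbm, -, hiso⟩
  · obtain ⟨-, hC, hext⟩ := stepExt_iff.1 hext
    obtain ⟨C', hext', hCC', hfresh⟩ := hext.exists_fresh hC.1 hB A'.G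
    have hC' : IsBM C' := hCC'.isBM hC
    have hdisj' : Disjoint A'.G C'.G := by
      obtain ⟨-, -, -, ⟨hsub, -⟩, -⟩ := hext'
      rw [← union_sdiff_of_subset hsub]
      exact disjoint_union_right.2 ⟨hdisj, hfresh⟩
    exact ⟨A', C', hA', hC', hA, hCC', hdisj', hfill.of_elemExt hA' hC' hdisj' hext'⟩
  · exact ⟨A', B', hA', hB', hA, (hiso.symm hBbm.1).trans hB, hdisj, hfill⟩

theorem of_ancestor_right (h : IsotropicCobordant A B) (hBC : ReflTransGen HomStep B C) :
    IsotropicCobordant A C := by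
  induction hBC with
  | refl => exact h
  | tail _ hstep ih => exact ih.of_homStep_right hstep

theorem of_ancestor_left (h : IsotropicCobordant A B) (hAC : ReflTransGen HomStep A C) :
    IsotropicCobordant C B :=
  (h.symm.of_ancestor_right hAC).symm

end IsotropicCobordant

theorem homologous_imp_cobordant_general {R : Type*} [CommRing R] [IsDomain R]
    (T₁ T₂ : PreBM R) (h₁ : IsBM T₁)
    (h : Homologous T₁ T₂) : Cobordant T₁ T₂ := by
  obtain ⟨V, hV₁, hV₂⟩ := h.exists_common_ancestor
  have hV : IsotropicCobordant V V := .refl (h₁.of_ancestor hV₁)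
  exact ((hV.of_ancestor_left hV₁).of_ancestor_right hV₂).cobordant

/-- Homologous based matrices over an integral domain are
cobordant. -/
theorem homologous_imp_cobordant {R : Type*} [CommRing R] [IsDomain R]
    (T₁ T₂ : PreBM R) (h₁ : IsBM T₁) (h₂ : IsBM T₂)
    (h : Homologous T₁ T₂) : Cobordant T₁ T₂ :=
  homologous_imp_cobordant_general T₁ T₂ h₁ h
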